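/- arXiv:1604.04569 — 3 statements merged into one kernel-verified Lean document; each statement's English description precedes it below -/
import Mathlib

section
/- Let R > 0 and ψ : [0, R) → ℝ be continuously differentiable satisfying (h1) ψ(0) > 0 and ψ′(0) = −1; (h2) ψ′ is convex and strictly increasing; (h3) ψ(t) = 0 for some t ∈ (0, R), with t⋆ := min{t ∈ [0, R) : ψ(t) = 0}. Then the sequence defined by t₀ = 0 and t_{k+1} = t_k − ψ(t_k)/ψ′(t_k) is well defined, strictly increasing, contained in [0, t⋆), converges to t⋆, and satisfies t⋆ − t_{k+1} ≤ (1/2)(t⋆ − t_k) for all k ≥ 0. If in addition ψ is twice continuously differentiable and (h4) ψ′(t⋆) < 0 holds, then t⋆ − t_{k+1} ≤ (ψ″(t⋆)/(−2ψ′(t⋆)))(t⋆ − t_k)² for all k ≥ 0. -/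
open Metric Set Filter Topology

/-!
Since `ψ'` is convex, the trapezoid rule overestimates its integral:
`ψ t⋆ - ψ x ≤ (t⋆ - x) (ψ' x + ψ' t⋆) / 2`. Rearranged, this is the error bound
`t⋆ - N x ≤ (ψ' t⋆ - ψ' x) / (-2 ψ' x) · (t⋆ - x)` for the Newton step `N`. As `ψ > 0` before its
first zero, `ψ' t⋆ ≤ 0`, so the factor is at most `1/2`; and `ψ' t⋆ - ψ' x ≤ ψ'' t⋆ (t⋆ - x)` by
convexity, which gives the quadratic bound. Strict monotonicity of `ψ'` keeps `N x` below `t⋆`.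
-/

lemma HasDerivAt.nonpos_of_eventually_le_left {f : ℝ → ℝ} {f' a : ℝ} (hf : HasDerivAt f f' a)
    (hle : ∀ᶠ x in 𝓝[<] a, f a ≤ f x) : f' ≤ 0 := by
  refine le_of_tendsto (hasDerivAt_iff_tendsto_slope_left_right.1 hf).1 ?_
  filter_upwards [hle, self_mem_nhdsWithin] with x hx hxa
  rw [slope_def_field]
  exact div_nonpos_of_nonneg_of_nonpos (sub_nonneg.2 hx) (sub_nonpos.2 (le_of_lt hxa))

lemma ConvexOn.le_add_mul_slope {f : ℝ → ℝ} {a b x : ℝ} (hf : ConvexOn ℝ (Icc a b) f)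
    (hx : x ∈ Icc a b) : f x ≤ f a + (x - a) * slope f a b := by
  rcases hx.1.eq_or_lt with rfl | hax
  · simp
  have hsec := hf.secant_mono (left_mem_Icc.2 (hx.1.trans hx.2)) hx
    (right_mem_Icc.2 (hx.1.trans hx.2)) hax.ne' (hax.trans_le hx.2).ne' hx.2
  rw [slope_def_field]
  rw [div_le_iff₀ (sub_pos.2 hax)] at hsec
  linarith [div_mul_eq_mul_div (f b - f a) (b - a) (x - a)]

theorem ConvexOn.sub_le_trapezoid {f f' : ℝ → ℝ} {a b : ℝ} (hab : a ≤ b)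
    (hf : ∀ x ∈ Icc a b, HasDerivAt f (f' x) x) (hf' : ConvexOn ℝ (Icc a b) f') :
    f b - f a ≤ (b - a) * (f' a + f' b) / 2 := by
  rcases hab.eq_or_lt with rfl | hab
  · simp
  set K := slope f' a b with hK
  have hB : ∀ x, HasDerivAt (fun x => f a + (x - a) * f' a + K / 2 * (x - a) ^ 2)
      (f' a + K * (x - a)) x := fun x =>
    (((((hasDerivAt_id x).sub_const a).mul_const (f' a)).const_add (f a)).fun_add
      ((((hasDerivAt_id x).sub_const a).fun_pow 2).const_mul (K / 2))).congr_deriv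
      (by simp only [id]; ring)
  have hle := image_le_of_deriv_right_le_deriv_boundary
    (fun x hx => (hf x hx).continuousAt.continuousWithinAt)
    (fun x hx => (hf x (Ico_subset_Icc_self hx)).hasDerivWithinAt) (le_of_eq (by ring))
    (fun x _ => (hB x).continuousAt.continuousWithinAt) (fun x _ => (hB x).hasDerivWithinAt)
    (fun x hx => by linarith [hf'.le_add_mul_slope (Ico_subset_Icc_self hx)])
    (right_mem_Icc.2 hab.le)
  have hKd : K * (b - a) ^ 2 = (f' b - f' a) * (b - a) := by
    rw [hK, slope_def_field]
    field_simp [(sub_pos.2 hab).ne']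
  linarith

lemma tendsto_of_sub_le_mul {u : ℕ → ℝ} {s c : ℝ} (hu : ∀ k, u k ≤ s) (hc0 : 0 ≤ c)
    (hc1 : c < 1) (hstep : ∀ k, s - u (k + 1) ≤ c * (s - u k)) : Tendsto u atTop (𝓝 s) := by
  have hgeom : ∀ k, s - u k ≤ c ^ k * (s - u 0) := by
    intro k
    induction k with
    | zero => simp
    | succ k ih =>
      calc s - u (k + 1) ≤ c * (s - u k) := hstep k
        _ ≤ c * (c ^ k * (s - u 0)) := mul_le_mul_of_nonneg_left ih hc0
        _ = c ^ (k + 1) * (s - u 0) := by ring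
  have hgap : Tendsto (fun k => s - u k) atTop (𝓝 0) := by
    refine squeeze_zero (fun k => sub_nonneg.2 (hu k)) hgeom ?_
    simpa using (tendsto_pow_atTop_nhds_zero_of_lt_one hc0 hc1).mul_const (s - u 0)
  simpa using (tendsto_const_nhds (x := s)).sub hgap

lemma pos_of_mem_Ico_of_isLeast_zero {ψ : ℝ → ℝ} {a R s x : ℝ} (hψ : ContinuousOn ψ (Ico a R))
    (ha : 0 < ψ a) (hs : IsLeast {t ∈ Ico a R | ψ t = 0} s) (hx : x ∈ Ico a s) : 0 < ψ x := by
  by_contra! hle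
  have hsub : Icc a x ⊆ Ico a R := fun y hy => ⟨hy.1, hy.2.trans_lt (hx.2.trans_le hs.1.1.2.le)⟩
  obtain ⟨y, hy, hψy⟩ := intermediate_value_Icc' hx.1 (hψ.mono hsub) ⟨hle, ha.le⟩
  linarith [hs.2 ⟨hsub hy, hψy⟩, hy.2, hx.2]

lemma le_zero_of_hasDerivAt_of_isLeast_zero {ψ : ℝ → ℝ} {ψ' a R s : ℝ}
    (hψ : ContinuousOn ψ (Ico a R)) (hψ' : HasDerivAt ψ ψ' s) (ha : 0 < ψ a)
    (hs : IsLeast {t ∈ Ico a R | ψ t = 0} s) : ψ' ≤ 0 := by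
  have has : a < s := hs.1.1.1.lt_of_ne fun h => by linarith [h ▸ hs.1.2]
  refine hψ'.nonpos_of_eventually_le_left ?_
  filter_upwards [Ioo_mem_nhdsLT has] with x hx
  exact hs.1.2 ▸ (pos_of_mem_Ico_of_isLeast_zero hψ ha hs ⟨hx.1.le, hx.2⟩).le

noncomputable def newtonStep (ψ ψ' : ℝ → ℝ) (x : ℝ) : ℝ := x - ψ x / ψ' x

section NewtonStep

variable {ψ ψ' : ℝ → ℝ} {x s : ℝ}

lemma lt_newtonStep (hψ : 0 < ψ x) (hψ' : ψ' x < 0) : x < newtonStep ψ ψ' x := by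
  have := div_neg_of_pos_of_neg hψ hψ'
  unfold newtonStep
  linarith

lemma newtonStep_lt (hxs : x < s) (hs : ψ s = 0) (hψ : ∀ y ∈ Icc x s, HasDerivAt ψ (ψ' y) y)
    (hmono : StrictMonoOn ψ' (Icc x s)) (hψ' : ψ' x < 0) : newtonStep ψ ψ' x < s := by
  obtain ⟨c, hc, hslope⟩ := exists_hasDerivAt_eq_slope ψ ψ' hxs
    (fun y hy => (hψ y hy).continuousAt.continuousWithinAt)
    (fun y hy => hψ y (Ioo_subset_Icc_self hy))
  have hlt : ψ' x < ψ' c :=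
    hmono (left_mem_Icc.2 hxs.le) (Ioo_subset_Icc_self hc) hc.1
  rw [hs, eq_div_iff (sub_pos.2 hxs).ne'] at hslope
  have : x - s < ψ x / ψ' x := by
    rw [lt_div_iff_of_neg hψ']
    nlinarith [sub_pos.2 hxs]
  unfold newtonStep
  linarith

lemma sub_newtonStep_le (hxs : x ≤ s) (hs : ψ s = 0) (hψ : ∀ y ∈ Icc x s, HasDerivAt ψ (ψ' y) y)
    (hconv : ConvexOn ℝ (Icc x s) ψ') (hψ' : ψ' x < 0) :
    s - newtonStep ψ ψ' x ≤ (ψ' s - ψ' x) / (-2 * ψ' x) * (s - x) := by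
  have htrap := hconv.sub_le_trapezoid hxs hψ
  rw [hs] at htrap
  unfold newtonStep
  rw [div_mul_eq_mul_div, le_div_iff₀ (by linarith)]
  have := div_mul_cancel₀ (ψ x) hψ'.ne
  nlinarith

lemma sub_newtonStep_le_half (hxs : x ≤ s) (hs : ψ s = 0)
    (hψ : ∀ y ∈ Icc x s, HasDerivAt ψ (ψ' y) y) (hconv : ConvexOn ℝ (Icc x s) ψ')
    (hψ' : ψ' x < 0) (hψ's : ψ' s ≤ 0) : s - newtonStep ψ ψ' x ≤ 1 / 2 * (s - x) := by
  refine (sub_newtonStep_le hxs hs hψ hconv hψ').trans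
    (mul_le_mul_of_nonneg_right ?_ (sub_nonneg.2 hxs))
  rw [div_le_iff₀ (by linarith)]
  linarith

lemma sub_newtonStep_le_sq {ψ'' : ℝ} (hxs : x < s) (hs : ψ s = 0)
    (hψ : ∀ y ∈ Icc x s, HasDerivAt ψ (ψ' y) y) (hconv : ConvexOn ℝ (Icc x s) ψ')
    (hψ'' : HasDerivAt ψ' ψ'' s) (hle : ψ' x ≤ ψ' s) (hψ's : ψ' s < 0) :
    s - newtonStep ψ ψ' x ≤ ψ'' / (-2 * ψ' s) * (s - x) ^ 2 := by
  have hd : 0 < s - x := sub_pos.2 hxs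
  have hslope := hconv.slope_le_of_hasDerivAt (left_mem_Icc.2 hxs.le)
    (right_mem_Icc.2 hxs.le) hxs hψ''
  rw [slope_def_field, div_le_iff₀ hd] at hslope
  have hfactor : (ψ' s - ψ' x) / (-2 * ψ' x) ≤ ψ'' * (s - x) / (-2 * ψ' s) :=
    calc (ψ' s - ψ' x) / (-2 * ψ' x) ≤ ψ'' * (s - x) / (-2 * ψ' x) :=
          div_le_div_of_nonneg_right hslope (by linarith)
      _ ≤ ψ'' * (s - x) / (-2 * ψ' s) :=
          div_le_div_of_nonneg_left (by linarith) (by linarith) (by linarith)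
  calc s - newtonStep ψ ψ' x ≤ (ψ' s - ψ' x) / (-2 * ψ' x) * (s - x) :=
        sub_newtonStep_le hxs.le hs hψ hconv (hle.trans_lt hψ's)
    _ ≤ ψ'' * (s - x) / (-2 * ψ' s) * (s - x) := by gcongr
    _ = ψ'' / (-2 * ψ' s) * (s - x) ^ 2 := by ring

end NewtonStep

theorem stmt6_general (R : ℝ) (ψ ψ' : ℝ → ℝ)
    (hψ1 : ∀ t ∈ Ico (0:ℝ) R, HasDerivAt ψ (ψ' t) t)
    (h1 : 0 < ψ 0)
    (h2a : ConvexOn ℝ (Ico (0:ℝ) R) ψ')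
    (h2b : StrictMonoOn ψ' (Ico (0:ℝ) R))
    (tstar : ℝ) (h3 : IsLeast {t ∈ Ico (0:ℝ) R | ψ t = 0} tstar)
    (t : ℕ → ℝ) (ht0 : t 0 = 0)
    (htrec : ∀ k, t (k + 1) = t k - ψ (t k) / ψ' (t k)) :
    StrictMono t ∧ (∀ k, t k ∈ Ico (0:ℝ) tstar) ∧
    Tendsto t atTop (nhds tstar) ∧
    (∀ k, tstar - t (k + 1) ≤ 1 / 2 * (tstar - t k)) ∧
    (∀ ψ'' : ℝ → ℝ, (∀ u ∈ Ico (0:ℝ) R, HasDerivAt ψ' (ψ'' u) u) →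
      ContinuousOn ψ'' (Ico (0:ℝ) R) → ψ' tstar < 0 →
      ∀ k, tstar - t (k + 1) ≤ ψ'' tstar / (-2 * ψ' tstar) * (tstar - t k) ^ 2) := by
  obtain ⟨⟨hts0, htsR⟩, hψts⟩ := h3.1
  have hsub : ∀ {x}, x ∈ Ico 0 tstar → Icc x tstar ⊆ Ico 0 R :=
    fun hx y hy => ⟨hx.1.trans hy.1, hy.2.trans_lt htsR⟩
  have hderiv : ∀ x ∈ Ico 0 tstar, ∀ y ∈ Icc x tstar, HasDerivAt ψ (ψ' y) y :=
    fun _ hx y hy => hψ1 y (hsub hx hy)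
  have hconv : ∀ x ∈ Ico 0 tstar, ConvexOn ℝ (Icc x tstar) ψ' :=
    fun _ hx => h2a.subset (hsub hx) (convex_Icc _ _)
  have hψc : ContinuousOn ψ (Ico 0 R) := fun y hy => (hψ1 y hy).continuousAt.continuousWithinAt
  have hpos : ∀ x ∈ Ico 0 tstar, 0 < ψ x := fun x => pos_of_mem_Ico_of_isLeast_zero hψc h1 h3
  have hψ'ts : ψ' tstar ≤ 0 :=
    le_zero_of_hasDerivAt_of_isLeast_zero hψc (hψ1 _ ⟨hts0, htsR⟩) h1 h3
  have hψ'lt : ∀ x ∈ Ico 0 tstar, ψ' x < ψ' tstar := fun x hx =>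
    h2b (hsub hx (left_mem_Icc.2 hx.2.le)) ⟨hts0, htsR⟩ hx.2
  have hψ'neg : ∀ x ∈ Ico 0 tstar, ψ' x < 0 := fun x hx => (hψ'lt x hx).trans_le hψ'ts
  have hmem : ∀ k, t k ∈ Ico 0 tstar := by
    intro k
    induction k with
    | zero =>
      rw [ht0]
      exact ⟨le_rfl, hts0.lt_of_ne fun h => by rw [← h] at hψts; linarith⟩
    | succ k ih =>
      rw [htrec]
      exact ⟨ih.1.trans (lt_newtonStep (hpos _ ih) (hψ'neg _ ih)).le,
        newtonStep_lt ih.2 hψts (hderiv _ ih) (h2b.mono (hsub ih)) (hψ'neg _ ih)⟩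
  have hhalf : ∀ k, tstar - t (k + 1) ≤ 1 / 2 * (tstar - t k) := fun k => by
    rw [htrec]
    exact sub_newtonStep_le_half (hmem k).2.le hψts (hderiv _ (hmem k)) (hconv _ (hmem k))
      (hψ'neg _ (hmem k)) hψ'ts
  refine ⟨strictMono_nat_of_lt_succ fun k => ?_, hmem,
    tendsto_of_sub_le_mul (fun k => (hmem k).2.le) (by norm_num) (by norm_num) hhalf, hhalf, ?_⟩
  · rw [htrec]
    exact lt_newtonStep (hpos _ (hmem k)) (hψ'neg _ (hmem k))
  · intro ψ'' hψ'' _ h4 k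
    rw [htrec]
    exact sub_newtonStep_le_sq (hmem k).2 hψts (hderiv _ (hmem k)) (hconv _ (hmem k))
      (hψ'' tstar ⟨hts0, htsR⟩) (hψ'lt _ (hmem k)).le h4

/-- Convergence of the scalar Newton sequence for the majorant function ψ
(Corollary `major.convergence`). -/
theorem stmt6 (R : ℝ) (hR : 0 < R) (ψ ψ' : ℝ → ℝ)
    (hψ1 : ∀ t ∈ Ico (0:ℝ) R, HasDerivAt ψ (ψ' t) t)
    (hψ'c : ContinuousOn ψ' (Ico (0:ℝ) R))
    (h1 : 0 < ψ 0) (h1' : ψ' 0 = -1)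
    (h2a : ConvexOn ℝ (Ico (0:ℝ) R) ψ')
    (h2b : StrictMonoOn ψ' (Ico (0:ℝ) R))
    (tstar : ℝ) (h3 : IsLeast {t ∈ Ico (0:ℝ) R | ψ t = 0} tstar)
    (t : ℕ → ℝ) (ht0 : t 0 = 0)
    (htrec : ∀ k, t (k + 1) = t k - ψ (t k) / ψ' (t k)) :
    StrictMono t ∧ (∀ k, t k ∈ Ico (0:ℝ) tstar) ∧
    Tendsto t atTop (nhds tstar) ∧
    (∀ k, tstar - t (k + 1) ≤ 1 / 2 * (tstar - t k)) ∧
    (∀ ψ'' : ℝ → ℝ, (∀ u ∈ Ico (0:ℝ) R, HasDerivAt ψ' (ψ'' u) u) →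
      ContinuousOn ψ'' (Ico (0:ℝ) R) → ψ' tstar < 0 →
      ∀ k, tstar - t (k + 1) ≤ ψ'' tstar / (-2 * ψ' tstar) * (tstar - t k) ^ 2) :=
  stmt6_general R ψ ψ' hψ1 h1 h2a h2b tstar h3 t ht0 htrec
end

section
/- Under the standing assumptions (A1)–(A4) and (h1)–(h3), define for t ∈ [0, t⋆) the set K(t) := {x ∈ Ω : ‖x − x₀‖ ≤ t and ‖(L_f(x, 0)⁻¹ ∩ B(x₁, r_{x₁})) − x‖ ≤ −ψ(t)/ψ′(t)}, K := ⋃_{t ∈ [0, t⋆)} K(t), the Newton iteration map N_{f+F}(x) := L_f(x, 0)⁻¹ ∩ B(x₁, r_{x₁}) (the unique element of that set) for x ∈ B(x₀, t⋆), and n_ψ(t) := t − ψ(t)/ψ′(t). Then for each t ∈ [0, t⋆): K(t) ⊆ B(x₀, t⋆) and N_{f+F}(K(t)) ⊆ K(n_ψ(t)). As a consequence, K ⊆ B(x₀, t⋆) and N_{f+F}(K) ⊆ K. -/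
/-!
The Newton step of the majorant `ψ` dominates the Newton step of the generalized equation. Let
`‖x - x₀‖ ≤ t`, let `x⁺ = N(x)` satisfy `‖x⁺ - x‖ ≤ -ψ(t)/ψ'(t)`, and let
`z = f(x⁺) - f(x) - f'(x)(x⁺ - x)` be the linearization error. Integrating the majorant condition
along the segment `[x, x⁺]` bounds `λ‖z‖` by the linearization error of `ψ` at `‖x - x₀‖` with
increment `‖x⁺ - x‖`; since `ψ'` is convex and increasing, that is at most the linearization error
at `t` with increment `-ψ(t)/ψ'(t)`, which equals `ψ(n_ψ(t))`. Because `x⁺` solves the inclusion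
linearized at `x⁺` with right-hand side `z`, the Lipschitz estimate of (A1), together with
`1 - λ‖f'(x⁺) - f'(x₀)‖ ≥ -ψ'(n_ψ(t))`, gives `‖N(x⁺) - x⁺‖ ≤ -ψ(n_ψ(t))/ψ'(n_ψ(t))`.
Taylor's bound `ψ(n_ψ(t)) ≤ ψ''(t⋆) ψ(0)² / 2` and (A4) put `z` in the ball where (A1) applies.
-/

open Metric Set

def linearizationError (ψ ψ' : ℝ → ℝ) (u a : ℝ) : ℝ := ψ (u + a) - ψ u - a * ψ' u

theorem monotoneOn_Icc_of_hasDerivAt_nonneg {g g' : ℝ → ℝ} {a b : ℝ}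
    (hg : ∀ x ∈ Icc a b, HasDerivAt g (g' x) x) (hg' : ∀ x ∈ Ioo a b, 0 ≤ g' x) :
    MonotoneOn g (Icc a b) := by
  refine monotoneOn_of_hasDerivWithinAt_nonneg (f' := g') (convex_Icc a b)
    (fun x hx => (hg x hx).continuousAt.continuousWithinAt) (fun x hx => ?_) ?_
  · rw [interior_Icc] at hx ⊢
    exact (hg x (Ioo_subset_Icc_self hx)).hasDerivWithinAt
  · rwa [interior_Icc]

section LinearizationError

variable {ψ ψ' ψ'' : ℝ → ℝ}

theorem linearizationError_newton {t : ℝ} (ht : ψ' t ≠ 0) :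
    linearizationError ψ ψ' t (-(ψ t / ψ' t)) = ψ (t - ψ t / ψ' t) := by
  rw [linearizationError, ← sub_eq_add_neg, neg_mul, div_mul_cancel₀ _ ht]
  ring

theorem hasDerivAt_linearizationError {u a : ℝ} (h : HasDerivAt ψ (ψ' (u + a)) (u + a)) :
    HasDerivAt (linearizationError ψ ψ' u) (ψ' (u + a) - ψ' u) a :=
  ((h.comp_const_add u a).sub_const (ψ u)).sub (hasDerivAt_mul_const (ψ' u))

theorem linearizationError_monotoneOn_increment {u c : ℝ}
    (hψ : ∀ v ∈ Icc u (u + c), HasDerivAt ψ (ψ' v) v) (hmono : ∀ v ∈ Icc u (u + c), ψ' u ≤ ψ' v) :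
    MonotoneOn (linearizationError ψ ψ' u) (Icc 0 c) := by
  refine monotoneOn_Icc_of_hasDerivAt_nonneg
    (fun a ha => hasDerivAt_linearizationError (hψ _ ⟨?_, ?_⟩))
    (fun a ha => sub_nonneg.2 (hmono _ ⟨?_, ?_⟩))
  all_goals linarith [ha.1, ha.2]

theorem linearizationError_le_of_sub_le_mul {u c M : ℝ}
    (hψ : ∀ v ∈ Icc u (u + c), HasDerivAt ψ (ψ' v) v)
    (hM : ∀ v ∈ Icc u (u + c), ψ' v - ψ' u ≤ M * (v - u)) (hc : 0 ≤ c) :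
    linearizationError ψ ψ' u c ≤ M / 2 * c ^ 2 := by
  have hmono : MonotoneOn (fun a => M / 2 * a ^ 2 - linearizationError ψ ψ' u a) (Icc 0 c) := by
    refine monotoneOn_Icc_of_hasDerivAt_nonneg (g' := fun a => M * a - (ψ' (u + a) - ψ' u))
      (fun a ha => ?_) (fun a ha => ?_)
    · have hmem : u + a ∈ Icc u (u + c) := ⟨by linarith [ha.1], by linarith [ha.2]⟩
      refine (((hasDerivAt_pow 2 a).const_mul (M / 2)).sub
        (hasDerivAt_linearizationError (hψ _ hmem))).congr_deriv ?_
      norm_num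
      ring
    · have := hM (u + a) ⟨by linarith [ha.1], by linarith [ha.2]⟩
      rw [add_sub_cancel_left] at this
      linarith
  have h0 : linearizationError ψ ψ' u 0 = 0 := by simp [linearizationError]
  have := hmono ⟨le_rfl, hc⟩ ⟨hc, le_rfl⟩ hc
  norm_num [h0] at this
  linarith

theorem linearizationError_monotoneOn_base {b t a : ℝ}
    (hψ : ∀ v ∈ Icc b (t + a), HasDerivAt ψ (ψ' v) v)
    (hψ' : ∀ v ∈ Icc b t, HasDerivAt ψ' (ψ'' v) v) (hconv : ConvexOn ℝ (Icc b (t + a)) ψ')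
    (ha : 0 ≤ a) : MonotoneOn (fun u => linearizationError ψ ψ' u a) (Icc b t) := by
  have hmem : ∀ u ∈ Icc b t, u ∈ Icc b (t + a) ∧ u + a ∈ Icc b (t + a) := fun u hu =>
    ⟨⟨hu.1, by linarith [hu.2]⟩, ⟨by linarith [hu.1], by linarith [hu.2]⟩⟩
  refine monotoneOn_Icc_of_hasDerivAt_nonneg
    (g' := fun u => ψ' (u + a) - ψ' u - a * ψ'' u) (fun u hu => ?_) (fun u hu => ?_)
  · exact (((hψ _ (hmem u hu).2).comp_add_const u a).sub (hψ u (hmem u hu).1)).sub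
      ((hψ' u hu).const_mul a)
  · have hu' := hmem u (Ioo_subset_Icc_self hu)
    rcases ha.eq_or_lt with rfl | hapos
    · simp
    have hsl := hconv.le_slope_of_hasDerivAt hu'.1 hu'.2 (by linarith)
      (hψ' u (Ioo_subset_Icc_self hu))
    rw [slope_def_field, add_sub_cancel_left, le_div_iff₀ hapos] at hsl
    linarith

end LinearizationError

theorem norm_sub_sub_fderiv_le_linearizationError {E F : Type*} [NormedAddCommGroup E]
    [NormedSpace ℝ E] [NormedAddCommGroup F] [NormedSpace ℝ F] {f : E → F} {f' : E → E →L[ℝ] F}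
    {ψ ψ' : ℝ → ℝ} {x d : E} {b c : ℝ} (hc : 0 ≤ c)
    (hf : ∀ τ ∈ Icc (0:ℝ) 1, HasFDerivAt f (f' (x + τ • d)) (x + τ • d))
    (hψ : ∀ τ ∈ Icc (0:ℝ) 1, HasDerivAt ψ (ψ' (b + τ * ‖d‖)) (b + τ * ‖d‖))
    (hmaj : ∀ τ ∈ Ico (0:ℝ) 1, c * ‖f' (x + τ • d) - f' x‖ ≤ ψ' (b + τ * ‖d‖) - ψ' b) :
    c * ‖f (x + d) - f x - f' x d‖ ≤ linearizationError ψ ψ' b ‖d‖ := by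
  set g : ℝ → F := fun τ => c • (f (x + τ • d) - f x - τ • f' x d)
  set B : ℝ → ℝ := fun τ => linearizationError ψ ψ' b (τ * ‖d‖)
  have hg : ∀ τ ∈ Icc (0:ℝ) 1, HasDerivAt g (c • (f' (x + τ • d) d - f' x d)) τ := by
    intro τ hτ
    have hline : HasDerivAt (fun τ : ℝ => x + τ • d) d τ := by
      simpa using ((hasDerivAt_id τ).smul_const d).const_add x
    have hlin : HasDerivAt (fun τ : ℝ => τ • f' x d) (f' x d) τ := by
      simpa using (hasDerivAt_id τ).smul_const (f' x d)
    exact ((((hf τ hτ).comp_hasDerivAt τ hline).sub_const (f x)).sub hlin).const_smul c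
  have hB : ∀ τ ∈ Icc (0:ℝ) 1, HasDerivAt B ((ψ' (b + τ * ‖d‖) - ψ' b) * ‖d‖) τ := fun τ hτ =>
    (hasDerivAt_linearizationError (hψ τ hτ)).comp (h := fun τ => τ * ‖d‖) τ
      (hasDerivAt_mul_const ‖d‖)
  have hbound : ∀ τ ∈ Ico (0:ℝ) 1,
      ‖c • (f' (x + τ • d) d - f' x d)‖ ≤ (ψ' (b + τ * ‖d‖) - ψ' b) * ‖d‖ := by
    intro τ hτ
    calc ‖c • (f' (x + τ • d) d - f' x d)‖ = c * ‖(f' (x + τ • d) - f' x) d‖ := by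
          rw [norm_smul, Real.norm_of_nonneg hc]; rfl
      _ ≤ c * (‖f' (x + τ • d) - f' x‖ * ‖d‖) := by gcongr; exact ContinuousLinearMap.le_opNorm _ _
      _ ≤ (ψ' (b + τ * ‖d‖) - ψ' b) * ‖d‖ := by
          rw [← mul_assoc]; exact mul_le_mul_of_nonneg_right (hmaj τ hτ) (norm_nonneg d)
  have hfence := image_norm_le_of_norm_deriv_right_le_deriv_boundary'
    (fun τ hτ => (hg τ hτ).continuousAt.continuousWithinAt)
    (fun τ hτ => (hg τ (Ico_subset_Icc_self hτ)).hasDerivWithinAt)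
    (by simp [g, B, linearizationError]) (fun τ hτ => (hB τ hτ).continuousAt.continuousWithinAt)
    (fun τ hτ => (hB τ (Ico_subset_Icc_self hτ)).hasDerivWithinAt) hbound
    (right_mem_Icc.2 zero_le_one)
  simpa [g, B, norm_smul, Real.norm_of_nonneg hc] using hfence

structure IsMajorant (ψ ψ' ψ'' : ℝ → ℝ) (R tstar : ℝ) : Prop where
  hasDerivAt : ∀ t ∈ Ico 0 R, HasDerivAt ψ (ψ' t) t
  hasDerivAt_deriv : ∀ t ∈ Ico 0 R, HasDerivAt ψ' (ψ'' t) t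
  apply_zero_pos : 0 < ψ 0
  deriv_zero : ψ' 0 = -1
  convexOn_deriv : ConvexOn ℝ (Ico 0 R) ψ'
  strictMonoOn_deriv : StrictMonoOn ψ' (Ico 0 R)
  isLeast_tstar : IsLeast {t ∈ Ico 0 R | ψ t = 0} tstar

namespace IsMajorant

variable {ψ ψ' ψ'' : ℝ → ℝ} {R tstar t : ℝ}

theorem mem_Ico (hψ : IsMajorant ψ ψ' ψ'' R tstar) (h0 : 0 ≤ t) (ht : t ≤ tstar) :
    t ∈ Ico 0 R :=
  ⟨h0, ht.trans_lt hψ.isLeast_tstar.1.1.2⟩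

theorem apply_tstar (hψ : IsMajorant ψ ψ' ψ'' R tstar) : ψ tstar = 0 :=
  hψ.isLeast_tstar.1.2

theorem tstar_pos (hψ : IsMajorant ψ ψ' ψ'' R tstar) : 0 < tstar := by
  refine hψ.isLeast_tstar.1.1.1.lt_of_ne ?_
  rintro rfl
  exact hψ.apply_zero_pos.ne' hψ.apply_tstar

theorem strictConvexOn (hψ : IsMajorant ψ ψ' ψ'' R tstar) : StrictConvexOn ℝ (Ico 0 R) ψ := by
  refine StrictMonoOn.strictConvexOn_of_deriv (convex_Ico 0 R)
    (fun v hv => (hψ.hasDerivAt v hv).continuousAt.continuousWithinAt) ?_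
  exact (hψ.strictMonoOn_deriv.mono interior_subset).congr
    fun v hv => ((hψ.hasDerivAt v (interior_subset hv)).deriv).symm

theorem apply_pos (hψ : IsMajorant ψ ψ' ψ'' R tstar) (h0 : 0 ≤ t) (ht : t < tstar) : 0 < ψ t := by
  by_contra! hle
  have hcont : ContinuousOn ψ (Icc 0 t) := fun v hv =>
    (hψ.hasDerivAt v (hψ.mem_Ico hv.1 (hv.2.trans ht.le))).continuousAt.continuousWithinAt
  obtain ⟨c, hc, hψc⟩ := intermediate_value_Icc' h0 hcont ⟨hle, hψ.apply_zero_pos.le⟩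
  exact (hψ.isLeast_tstar.2 ⟨hψ.mem_Ico hc.1 (hc.2.trans ht.le), hψc⟩).not_gt (hc.2.trans_lt ht)

theorem deriv_neg (hψ : IsMajorant ψ ψ' ψ'' R tstar) (h0 : 0 ≤ t) (ht : t < tstar) : ψ' t < 0 := by
  have hslope := hψ.strictConvexOn.convexOn.le_slope_of_hasDerivAt (hψ.mem_Ico h0 ht.le)
    (hψ.mem_Ico hψ.tstar_pos.le le_rfl) ht (hψ.hasDerivAt t (hψ.mem_Ico h0 ht.le))
  rw [slope_def_field, hψ.apply_tstar] at hslope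
  have : (0 - ψ t) / (tstar - t) < 0 :=
    div_neg_of_neg_of_pos (by linarith [hψ.apply_pos h0 ht]) (by linarith)
  linarith

theorem deriv_tstar_nonpos (hψ : IsMajorant ψ ψ' ψ'' R tstar) : ψ' tstar ≤ 0 := by
  have hcont : ContinuousWithinAt ψ' (Ico 0 tstar) tstar :=
    (hψ.hasDerivAt_deriv tstar (hψ.mem_Ico hψ.tstar_pos.le le_rfl)).continuousAt.continuousWithinAt
  refine hcont.closure_le (g := fun _ => 0) ?_ continuousWithinAt_const
    fun v hv => (hψ.deriv_neg hv.1 hv.2).le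
  rw [closure_Ico hψ.tstar_pos.ne]
  exact right_mem_Icc.2 hψ.tstar_pos.le

theorem newton_lt_tstar (hψ : IsMajorant ψ ψ' ψ'' R tstar) (h0 : 0 ≤ t) (ht : t < tstar) :
    t - ψ t / ψ' t < tstar := by
  have hslope := hψ.strictConvexOn.lt_slope_of_hasDerivAt (hψ.mem_Ico h0 ht.le)
    (hψ.mem_Ico hψ.tstar_pos.le le_rfl) ht (hψ.hasDerivAt t (hψ.mem_Ico h0 ht.le))
  rw [slope_def_field, hψ.apply_tstar, lt_div_iff₀ (sub_pos.2 ht)] at hslope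
  have : t - tstar < ψ t / ψ' t := by
    rw [lt_div_iff_of_neg (hψ.deriv_neg h0 ht)]
    linarith
  linarith

theorem newton_increment_pos (hψ : IsMajorant ψ ψ' ψ'' R tstar) (h0 : 0 ≤ t) (ht : t < tstar) :
    0 < -(ψ t / ψ' t) :=
  neg_pos.2 (div_neg_of_pos_of_neg (hψ.apply_pos h0 ht) (hψ.deriv_neg h0 ht))

-- `ψ + ψ(0) ψ'` is convex, vanishes at `0` and is nonpositive at `t⋆`
theorem newton_increment_le (hψ : IsMajorant ψ ψ' ψ'' R tstar) (h0 : 0 ≤ t) (ht : t < tstar) :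
    -(ψ t / ψ' t) ≤ ψ 0 := by
  have hconv : ConvexOn ℝ (Ico 0 R) (fun v => ψ v + ψ 0 * ψ' v) :=
    hψ.strictConvexOn.convexOn.add (hψ.convexOn_deriv.smul hψ.apply_zero_pos.le)
  have hle := hconv.le_on_segment (hψ.mem_Ico le_rfl hψ.tstar_pos.le)
    (hψ.mem_Ico hψ.tstar_pos.le le_rfl)
    (show t ∈ segment ℝ 0 tstar by rw [segment_eq_Icc hψ.tstar_pos.le]; exact ⟨h0, ht.le⟩)
  rw [hψ.deriv_zero, hψ.apply_tstar, mul_neg_one, add_neg_cancel, zero_add,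
    max_eq_left (mul_nonpos_of_nonneg_of_nonpos hψ.apply_zero_pos.le hψ.deriv_tstar_nonpos)]
    at hle
  rw [neg_div', div_le_iff_of_neg (hψ.deriv_neg h0 ht)]
  linarith

theorem deriv_sub_le_mul (hψ : IsMajorant ψ ψ' ψ'' R tstar) {v : ℝ} (h0 : 0 ≤ t) (htv : t ≤ v)
    (hv : v ≤ tstar) : ψ' v - ψ' t ≤ ψ'' tstar * (v - t) := by
  rcases htv.eq_or_lt with rfl | htv
  · simp
  have hts := htv.trans_le hv
  have ht_mem := hψ.mem_Ico h0 hts.le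
  have hts_mem := hψ.mem_Ico (h0.trans hts.le) le_rfl
  have hsec := hψ.convexOn_deriv.secant_mono ht_mem (hψ.mem_Ico (h0.trans htv.le) hv) hts_mem
    htv.ne' hts.ne' hv
  have hsl := hψ.convexOn_deriv.slope_le_of_hasDerivAt ht_mem hts_mem hts
    (hψ.hasDerivAt_deriv tstar hts_mem)
  rw [slope_def_field] at hsl
  rw [← div_le_iff₀ (sub_pos.2 htv)]
  exact hsec.trans hsl

theorem deriv2_tstar_nonneg (hψ : IsMajorant ψ ψ' ψ'' R tstar) : 0 ≤ ψ'' tstar := by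
  have hle := hψ.deriv_sub_le_mul le_rfl hψ.tstar_pos.le le_rfl
  have hlt := hψ.strictMonoOn_deriv (hψ.mem_Ico le_rfl hψ.tstar_pos.le)
    (hψ.mem_Ico hψ.tstar_pos.le le_rfl) hψ.tstar_pos
  by_contra! hneg
  nlinarith [hψ.tstar_pos]

theorem linearizationError_le_apply_newton (hψ : IsMajorant ψ ψ' ψ'' R tstar) {a b : ℝ}
    (hb : 0 ≤ b) (hbt : b ≤ t) (ht : t < tstar) (ha : 0 ≤ a) (hat : a ≤ -(ψ t / ψ' t)) :
    linearizationError ψ ψ' b a ≤ ψ (t - ψ t / ψ' t) := by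
  have hn := hψ.newton_lt_tstar (hb.trans hbt) ht
  have hmem : ∀ v, b ≤ v → v ≤ t + -(ψ t / ψ' t) → v ∈ Ico 0 R := fun v hbv hv =>
    hψ.mem_Ico (hb.trans hbv) (by linarith)
  have hmem' : ∀ v ∈ Icc b (t + a), v ∈ Ico 0 R := fun v hv => hmem v hv.1 (by linarith [hv.2])
  rw [← linearizationError_newton (ψ := ψ) (hψ.deriv_neg (hb.trans hbt) ht).ne]
  calc linearizationError ψ ψ' b a ≤ linearizationError ψ ψ' t a :=
        linearizationError_monotoneOn_base (fun v hv => hψ.hasDerivAt v (hmem' v hv))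
          (fun v hv => hψ.hasDerivAt_deriv v (hmem' v ⟨hv.1, by linarith [hv.2]⟩))
          (hψ.convexOn_deriv.subset hmem' (convex_Icc _ _)) ha ⟨le_rfl, hbt⟩ ⟨hbt, le_rfl⟩ hbt
    _ ≤ linearizationError ψ ψ' t (-(ψ t / ψ' t)) :=
        linearizationError_monotoneOn_increment
          (fun v hv => hψ.hasDerivAt v (hmem v (hbt.trans hv.1) hv.2))
          (fun v hv => hψ.strictMonoOn_deriv.monotoneOn (hmem t hbt (by linarith))
            (hmem v (hbt.trans hv.1) hv.2) hv.1)
          ⟨ha, hat⟩ ⟨ha.trans hat, le_rfl⟩ hat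

theorem apply_newton_le (hψ : IsMajorant ψ ψ' ψ'' R tstar) (h0 : 0 ≤ t) (ht : t < tstar) :
    ψ (t - ψ t / ψ' t) ≤ ψ'' tstar / 2 * ψ 0 ^ 2 := by
  have hinc := hψ.newton_increment_pos h0 ht
  have hn := hψ.newton_lt_tstar h0 ht
  rw [← linearizationError_newton (ψ := ψ) (hψ.deriv_neg h0 ht).ne]
  calc linearizationError ψ ψ' t (-(ψ t / ψ' t)) ≤ ψ'' tstar / 2 * (-(ψ t / ψ' t)) ^ 2 :=
        linearizationError_le_of_sub_le_mul
          (fun v hv => hψ.hasDerivAt v (hψ.mem_Ico (h0.trans hv.1) (by linarith [hv.2])))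
          (fun v hv => hψ.deriv_sub_le_mul h0 hv.1 (by linarith [hv.2])) hinc.le
    _ ≤ ψ'' tstar / 2 * ψ 0 ^ 2 := by
        have := hψ.deriv2_tstar_nonneg
        gcongr
        exact hψ.newton_increment_le h0 ht

end IsMajorant

section Newton

variable {X Y : Type*} [NormedAddCommGroup X] [NormedSpace ℝ X] [NormedAddCommGroup Y]
  [NormedSpace ℝ Y] {Ω : Set X} {f : X → Y} {f' : X → X →L[ℝ] Y} {x₀ : X} {κ R lam : ℝ}
  {ψ ψ' : ℝ → ℝ}

theorem lam_mul_norm_sub_sub_le_linearizationError (hfd : ∀ x ∈ Ω, HasFDerivAt f (f' x) x)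
    {ρ : ℝ} (hΩ : ball x₀ ρ ⊆ Ω) (hρκ : ρ ≤ κ) (hρR : ρ ≤ R)
    (hψ : ∀ t ∈ Ico (0:ℝ) R, HasDerivAt ψ (ψ' t) t)
    (hmaj : ∀ x ∈ ball x₀ κ, ∀ y ∈ ball x₀ κ, ‖y - x‖ + ‖x - x₀‖ < R →
      lam * ‖f' y - f' x‖ ≤ ψ' (‖y - x‖ + ‖x - x₀‖) - ψ' ‖x - x₀‖)
    (hlam : 0 ≤ lam) {x y : X} (hxy : ‖x - x₀‖ + ‖y - x‖ < ρ) :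
    lam * ‖f y - f x - f' x (y - x)‖ ≤ linearizationError ψ ψ' ‖x - x₀‖ ‖y - x‖ := by
  have hseg : ∀ τ ∈ Icc (0:ℝ) 1, ‖τ • (y - x)‖ = τ * ‖y - x‖ ∧ ‖x - x₀‖ + τ * ‖y - x‖ < ρ :=
    fun τ hτ => ⟨by rw [norm_smul, Real.norm_of_nonneg hτ.1],
      by nlinarith [norm_nonneg (y - x), hτ.2]⟩
  have hmem : ∀ τ ∈ Icc (0:ℝ) 1, x + τ • (y - x) ∈ ball x₀ ρ := fun τ hτ => by
    rw [mem_ball_iff_norm, add_sub_right_comm]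
    exact (norm_add_le _ _).trans_lt ((hseg τ hτ).1 ▸ (hseg τ hτ).2)
  have hx : x ∈ ball x₀ κ := mem_ball_iff_norm.2 (by linarith [norm_nonneg (y - x)])
  have hbound := norm_sub_sub_fderiv_le_linearizationError (ψ := ψ) (ψ' := ψ') (b := ‖x - x₀‖)
    hlam
    (fun τ hτ => hfd _ (hΩ (hmem τ hτ)))
    (fun τ hτ => hψ _ ⟨by positivity [hτ.1], by linarith [(hseg τ hτ).2]⟩)
    (fun τ hτ => by
      have h := hmaj x hx _ (ball_subset_ball hρκ (hmem τ (Ico_subset_Icc_self hτ)))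
      rw [add_sub_cancel_left, (hseg τ (Ico_subset_Icc_self hτ)).1, add_comm] at h
      exact h (by linarith [(hseg τ (Ico_subset_Icc_self hτ)).2]))
  rwa [add_sub_cancel] at hbound

theorem neg_deriv_le_one_sub_lam_mul_norm (hψ0 : ψ' 0 = -1)
    (hmaj : ∀ x ∈ ball x₀ κ, ∀ y ∈ ball x₀ κ, ‖y - x‖ + ‖x - x₀‖ < R →
      lam * ‖f' y - f' x‖ ≤ ψ' (‖y - x‖ + ‖x - x₀‖) - ψ' ‖x - x₀‖)
    {y : X} (hy : y ∈ ball x₀ κ) (hyR : ‖y - x₀‖ < R) :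
    -ψ' ‖y - x₀‖ ≤ 1 - lam * ‖f' y - f' x₀‖ := by
  have h := hmaj x₀ (mem_ball_self (pos_of_mem_ball hy)) y hy (by simpa using hyR)
  simp only [sub_self, norm_zero, add_zero, hψ0] at h
  linarith

theorem newton_step_mem (hfd : ∀ x ∈ Ω, HasFDerivAt f (f' x) x) {F : X → Set Y} {x₁ : X}
    {rx1 r0 rx0 : ℝ} (hlam : 0 < lam) (hr0 : 0 < r0) (hball : ball x₀ rx0 ⊆ Ω) {s : X → Y → X}
    (hA1 : ∀ x ∈ ball x₀ rx0,
      lam * ‖f' x - f' x₀‖ < 1 ∧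
      (∀ z ∈ ball (0:Y) r0,
        ({y : X | z - (f x + f' x (y - x)) ∈ F y} ∩ ball x₁ rx1) = {s x z}) ∧
      (∀ u ∈ ball (0:Y) r0, ∀ v ∈ ball (0:Y) r0,
        ‖s x u - s x v‖ ≤ lam / (1 - lam * ‖f' x - f' x₀‖) * ‖u - v‖))
    {ψ'' : ℝ → ℝ} {tstar : ℝ} (hψ : IsMajorant ψ ψ' ψ'' R tstar)
    (hmaj : ∀ x ∈ ball x₀ κ, ∀ y ∈ ball x₀ κ, ‖y - x‖ + ‖x - x₀‖ < R →
      lam * ‖f' y - f' x‖ ≤ ψ' (‖y - x‖ + ‖x - x₀‖) - ψ' ‖x - x₀‖)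
    (hA4a : tstar ≤ min κ rx0) (hA4b : ψ'' tstar / (2 * lam) * ψ 0 ^ 2 < r0)
    {t : ℝ} (ht : t < tstar) {x : X} (hxt : ‖x - x₀‖ ≤ t) (hx : ‖s x 0 - x‖ ≤ -(ψ t / ψ' t)) :
    s x 0 ∈ Ω ∧ ‖s x 0 - x₀‖ ≤ t - ψ t / ψ' t ∧
      ‖s (s x 0) 0 - s x 0‖ ≤ -(ψ (t - ψ t / ψ' t) / ψ' (t - ψ t / ψ' t)) := by
  set n := t - ψ t / ψ' t
  set y := s x 0
  have ht0 : 0 ≤ t := (norm_nonneg _).trans hxt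
  have hκ : tstar ≤ κ := hA4a.trans (min_le_left _ _)
  have hrx0 : tstar ≤ rx0 := hA4a.trans (min_le_right _ _)
  have hn : n < tstar := hψ.newton_lt_tstar ht0 ht
  have hn0 : 0 ≤ n := by linarith [hψ.newton_increment_pos ht0 ht]
  have hyn : ‖y - x₀‖ ≤ n := (norm_sub_le_norm_sub_add_norm_sub y x x₀).trans (by linarith)
  have hx_ball : x ∈ ball x₀ rx0 := mem_ball_iff_norm.2 (by linarith)
  have hy_ball : y ∈ ball x₀ rx0 := mem_ball_iff_norm.2 (by linarith)
  obtain ⟨hyF, hy₁⟩ : y ∈ {w | 0 - (f x + f' x (w - x)) ∈ F w} ∩ ball x₁ rx1 := by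
    rw [(hA1 x hx_ball).2.1 0 (mem_ball_self hr0)]
    rfl
  set z := f y - f x - f' x (y - x)
  have hz_le : lam * ‖z‖ ≤ ψ n :=
    (lam_mul_norm_sub_sub_le_linearizationError hfd ((ball_subset_ball hrx0).trans hball) hκ
      (hψ.mem_Ico hψ.tstar_pos.le le_rfl).2.le hψ.hasDerivAt hmaj hlam.le (by linarith)).trans
      (hψ.linearizationError_le_apply_newton (norm_nonneg _) hxt ht (norm_nonneg _) hx)
  have hz : z ∈ ball (0:Y) r0 := by
    rw [mem_ball_zero_iff]
    have hA4b' : ψ'' tstar / 2 * ψ 0 ^ 2 < lam * r0 := by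
      rw [div_mul_eq_mul_div, div_lt_iff₀ (by positivity)] at hA4b
      linarith
    nlinarith [hψ.apply_newton_le ht0 ht]
  obtain ⟨-, hsing, hlip⟩ := hA1 y hy_ball
  -- `y` also solves the inclusion linearized at `y` itself, with right-hand side `z`
  have hfix : s y z = y := by
    have hy : y ∈ {w | z - (f y + f' y (w - y)) ∈ F w} ∩ ball x₁ rx1 :=
      ⟨by simpa [z, sub_sub, add_comm] using hyF, hy₁⟩
    rw [hsing z hz] at hy
    exact hy.symm
  have hden : -ψ' n ≤ 1 - lam * ‖f' y - f' x₀‖ :=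
    (neg_le_neg (hψ.strictMonoOn_deriv.monotoneOn (hψ.mem_Ico (norm_nonneg _) (hyn.trans hn.le))
      (hψ.mem_Ico hn0 hn.le) hyn)).trans
      (neg_deriv_le_one_sub_lam_mul_norm hψ.deriv_zero hmaj
        (mem_ball_iff_norm.2 (by linarith)) (hψ.mem_Ico (norm_nonneg _) (hyn.trans hn.le)).2)
  have hdpos : 0 < -ψ' n := neg_pos.2 (hψ.deriv_neg hn0 hn)
  refine ⟨hball hy_ball, hyn, ?_⟩
  calc ‖s y 0 - y‖ = ‖s y 0 - s y z‖ := by rw [hfix]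
    _ ≤ lam / (1 - lam * ‖f' y - f' x₀‖) * ‖0 - z‖ := hlip 0 (mem_ball_self hr0) z hz
    _ ≤ lam / (-ψ' n) * ‖z‖ := by rw [zero_sub, norm_neg]; gcongr
    _ = lam * ‖z‖ / (-ψ' n) := by ring
    _ ≤ ψ n / (-ψ' n) := by gcongr
    _ = -(ψ n / ψ' n) := by rw [div_neg]

end Newton

theorem stmt9_general
    {X Y : Type*} [NormedAddCommGroup X] [NormedSpace ℝ X]
    [NormedAddCommGroup Y] [NormedSpace ℝ Y]
    (Ω : Set X)
    (f : X → Y) (f' : X → X →L[ℝ] Y) (F : X → Set Y)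
    (hfd : ∀ x ∈ Ω, HasFDerivAt f (f' x) x)
    (x₀ : X) (R : ℝ)
    (κ : ℝ)
    -- (A1): strong-regularity constants and the single-valued selection `s`
    (x₁ : X)
    (lam rx1 r0 rx0 : ℝ)
    (hlam : 0 < lam) (hr0 : 0 < r0)
    (hball : ball x₀ rx0 ⊆ Ω)
    (s : X → Y → X)
    (hA1 : ∀ x ∈ ball x₀ rx0,
      lam * ‖f' x - f' x₀‖ < 1 ∧
      (∀ z ∈ ball (0:Y) r0,
        ({y : X | z - (f x + f' x (y - x)) ∈ F y} ∩ ball x₁ rx1) = {s x z}) ∧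
      (∀ u ∈ ball (0:Y) r0, ∀ v ∈ ball (0:Y) r0,
        ‖s x u - s x v‖ ≤ lam / (1 - lam * ‖f' x - f' x₀‖) * ‖u - v‖))
    -- (A2): the majorant function ψ and the majorant condition
    (ψ ψ' ψ'' : ℝ → ℝ)
    (hψ1 : ∀ t ∈ Ico (0:ℝ) R, HasDerivAt ψ (ψ' t) t)
    (hψ2 : ∀ t ∈ Ico (0:ℝ) R, HasDerivAt ψ' (ψ'' t) t)
    (hmaj : ∀ x ∈ ball x₀ κ, ∀ y ∈ ball x₀ κ, ‖y - x‖ + ‖x - x₀‖ < R →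
      lam * ‖f' y - f' x‖ ≤ ψ' (‖y - x‖ + ‖x - x₀‖) - ψ' ‖x - x₀‖)
    -- (h1)-(h3)
    (h1 : 0 < ψ 0) (h1' : ψ' 0 = -1)
    (h2a : ConvexOn ℝ (Ico (0:ℝ) R) ψ')
    (h2b : StrictMonoOn ψ' (Ico (0:ℝ) R))
    (tstar : ℝ)
    (h3 : IsLeast {t ∈ Ico (0:ℝ) R | ψ t = 0} tstar)
    -- (A4)
    (hA4a : tstar ≤ min κ rx0)
    (hA4b : ψ'' tstar / (2 * lam) * ψ 0 ^ 2 < r0)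
    (K : ℝ → Set X)
    (hK : ∀ t : ℝ, K t = {x : X | x ∈ Ω ∧ ‖x - x₀‖ ≤ t ∧ ‖s x 0 - x‖ ≤ -(ψ t / ψ' t)})
    (nψ : ℝ → ℝ) (hnψ : ∀ t : ℝ, nψ t = t - ψ t / ψ' t)
    :
    (∀ t ∈ Ico (0:ℝ) tstar,
      K t ⊆ ball x₀ tstar ∧ (∀ x ∈ K t, s x 0 ∈ K (nψ t))) ∧
    (⋃ t ∈ Ico (0:ℝ) tstar, K t) ⊆ ball x₀ tstar ∧
    (∀ x ∈ ⋃ t ∈ Ico (0:ℝ) tstar, K t, s x 0 ∈ ⋃ t ∈ Ico (0:ℝ) tstar, K t) := by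
  have hψ : IsMajorant ψ ψ' ψ'' R tstar := ⟨hψ1, hψ2, h1, h1', h2a, h2b, h3⟩
  have hsub : ∀ t ∈ Ico (0:ℝ) tstar, K t ⊆ ball x₀ tstar := fun t ht x hx => by
    rw [hK] at hx
    exact mem_ball_iff_norm.2 (hx.2.1.trans_lt ht.2)
  have hstep : ∀ t ∈ Ico (0:ℝ) tstar, ∀ x ∈ K t, s x 0 ∈ K (nψ t) := fun t ht x hx => by
    rw [hK] at hx
    rw [hK, hnψ]
    exact newton_step_mem hfd hlam hr0 hball hA1 hψ hmaj hA4a hA4b ht.2 hx.2.1 hx.2.2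
  have hnψ_mem : ∀ t ∈ Ico (0:ℝ) tstar, nψ t ∈ Ico (0:ℝ) tstar := fun t ht => by
    rw [hnψ]
    exact ⟨by linarith [ht.1, hψ.newton_increment_pos ht.1 ht.2], hψ.newton_lt_tstar ht.1 ht.2⟩
  refine ⟨fun t ht => ⟨hsub t ht, hstep t ht⟩, iUnion₂_subset hsub, ?_⟩
  simp only [mem_iUnion]
  rintro x ⟨t, ht, hx⟩
  exact ⟨nψ t, hnψ_mem t ht, hstep t ht x hx⟩

/-- Proposition `pr:syn`: the sets `K(t)` are invariant under the Newton iteration mapping `N_{f+F}(x) = s x 0`. -/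
theorem stmt9
    {X Y : Type*} [NormedAddCommGroup X] [NormedSpace ℝ X] [CompleteSpace X]
    [NormedAddCommGroup Y] [NormedSpace ℝ Y] [CompleteSpace Y]
    (Ω : Set X) (hΩ : IsOpen Ω)
    (f : X → Y) (f' : X → X →L[ℝ] Y) (F : X → Set Y)
    (hfd : ∀ x ∈ Ω, HasFDerivAt f (f' x) x)
    (hf'c : ContinuousOn f' Ω)
    (hFg : IsClosed {p : X × Y | p.2 ∈ F p.1})
    (x₀ : X) (hx₀ : x₀ ∈ Ω) (R : ℝ) (hR : 0 < R)
    (κ : ℝ) (hκ : κ = sSup {t : ℝ | t ∈ Ico (0:ℝ) R ∧ ball x₀ t ⊆ Ω})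
    -- (A1): strong-regularity constants and the single-valued selection `s`
    (x₁ : X) (hx₁ : x₁ ∈ Ω)
    (hx₁sol : -(f x₀ + f' x₀ (x₁ - x₀)) ∈ F x₁)
    (lam rx1 r0 rx0 : ℝ)
    (hlam : 0 < lam) (hrx1 : 0 < rx1) (hr0 : 0 < r0) (hrx0 : 0 < rx0)
    (hball : ball x₀ rx0 ⊆ Ω)
    (s : X → Y → X)
    (hA1 : ∀ x ∈ ball x₀ rx0,
      lam * ‖f' x - f' x₀‖ < 1 ∧
      (∀ z ∈ ball (0:Y) r0,
        ({y : X | z - (f x + f' x (y - x)) ∈ F y} ∩ ball x₁ rx1) = {s x z}) ∧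
      (∀ u ∈ ball (0:Y) r0, ∀ v ∈ ball (0:Y) r0,
        ‖s x u - s x v‖ ≤ lam / (1 - lam * ‖f' x - f' x₀‖) * ‖u - v‖))
    -- (A2): the majorant function ψ and the majorant condition
    (ψ ψ' ψ'' : ℝ → ℝ)
    (hψ1 : ∀ t ∈ Ico (0:ℝ) R, HasDerivAt ψ (ψ' t) t)
    (hψ2 : ∀ t ∈ Ico (0:ℝ) R, HasDerivAt ψ' (ψ'' t) t)
    (hψ2c : ContinuousOn ψ'' (Ico (0:ℝ) R))
    (hmaj : ∀ x ∈ ball x₀ κ, ∀ y ∈ ball x₀ κ, ‖y - x‖ + ‖x - x₀‖ < R →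
      lam * ‖f' y - f' x‖ ≤ ψ' (‖y - x‖ + ‖x - x₀‖) - ψ' ‖x - x₀‖)
    -- (A3)
    (hA3 : ‖x₁ - x₀‖ ≤ ψ 0)
    -- (h1)-(h3)
    (h1 : 0 < ψ 0) (h1' : ψ' 0 = -1)
    (h2a : ConvexOn ℝ (Ico (0:ℝ) R) ψ')
    (h2b : StrictMonoOn ψ' (Ico (0:ℝ) R))
    (tstar : ℝ)
    (h3 : IsLeast {t ∈ Ico (0:ℝ) R | ψ t = 0} tstar)
    -- (A4)
    (hA4a : tstar ≤ min κ rx0)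
    (hA4b : ψ'' tstar / (2 * lam) * ψ 0 ^ 2 < r0)
    (K : ℝ → Set X)
    (hK : ∀ t : ℝ, K t = {x : X | x ∈ Ω ∧ ‖x - x₀‖ ≤ t ∧ ‖s x 0 - x‖ ≤ -(ψ t / ψ' t)})
    (nψ : ℝ → ℝ) (hnψ : ∀ t : ℝ, nψ t = t - ψ t / ψ' t)
    :
    (∀ t ∈ Ico (0:ℝ) tstar,
      K t ⊆ ball x₀ tstar ∧ (∀ x ∈ K t, s x 0 ∈ K (nψ t))) ∧
    (⋃ t ∈ Ico (0:ℝ) tstar, K t) ⊆ ball x₀ tstar ∧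
    (∀ x ∈ ⋃ t ∈ Ico (0:ℝ) tstar, K t, s x 0 ∈ ⋃ t ∈ Ico (0:ℝ) tstar, K t) :=
  stmt9_general Ω f f' F hfd x₀ R κ x₁ lam rx1 r0 rx0 hlam hr0 hball s hA1 ψ ψ' ψ'' hψ1 hψ2 hmaj h1
    h1' h2a h2b tstar h3 hA4a hA4b K hK nψ hnψ
end

section
/- Let X, Y be Banach spaces, Ω ⊆ X an open set, and f : Ω → Y twice continuously differentiable. Let x₀ ∈ Ω, R > 0 and κ := sup{t ∈ [0, R) : B(x₀, t) ⊆ Ω}. Let λ > 0 and ψ : [0, R) → ℝ be twice continuously differentiable with ψ″ nondecreasing on [0, R), and suppose λ‖f″(x)‖ ≤ ψ″(‖x − x₀‖) for all x ∈ B(x₀, κ). Then λ‖f′(y) − f′(x)‖ ≤ ψ′(‖y − x‖ + ‖x − x₀‖) − ψ′(‖x − x₀‖) for all x, y ∈ B(x₀, κ) with ‖y − x‖ + ‖x − x₀‖ < R. -/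
open Metric Set

/-! Restrict to the segment `t ↦ x + t • (y - x)`, `t ∈ [0, 1]`. Along it the derivative of
`λ (f′(x + t • (y - x)) - f′ x)` has norm at most `λ ‖f″‖ ‖y - x‖`, and since
`‖x + t • (y - x) - x₀‖ ≤ ‖x - x₀‖ + t ‖y - x‖` and `ψ″` is nondecreasing, this is at most the
derivative of the scalar function `t ↦ ψ′(‖x - x₀‖ + t ‖y - x‖) - ψ′(‖x - x₀‖)`. Both functions
vanish at `t = 0`, so the comparison principle for norms gives the bound at `t = 1`. -/

theorem Metric.ball_sSup_subset {X : Type*} [PseudoMetricSpace X] {x : X} {Ω : Set X}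
    {S : Set ℝ} (hS : ∀ t ∈ S, ball x t ⊆ Ω) : ball x (sSup S) ⊆ Ω := by
  intro z hz
  obtain rfl | hne := S.eq_empty_or_nonempty
  · simp at hz
  obtain ⟨t, ht, hzt⟩ := exists_lt_of_lt_csSup hne (mem_ball.mp hz)
  exact hS t ht (mem_ball.mpr hzt)

theorem norm_sub_le_of_norm_fderiv_le_majorant
    {X E : Type*} [NormedAddCommGroup X] [NormedSpace ℝ X]
    [NormedAddCommGroup E] [NormedSpace ℝ E]
    {s : Set X} (hs : Convex ℝ s) {g : X → E} {g' : X → X →L[ℝ] E}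
    (hg : ∀ z ∈ s, HasFDerivAt g (g' z) z) {x₀ : X} {R : ℝ} {φ φ' : ℝ → ℝ}
    (hφ : ∀ t ∈ Ico (0:ℝ) R, HasDerivAt φ (φ' t) t) (hφ' : MonotoneOn φ' (Ico (0:ℝ) R))
    (hbound : ∀ z ∈ s, ‖g' z‖ ≤ φ' ‖z - x₀‖) {x y : X} (hx : x ∈ s) (hy : y ∈ s)
    (hxy : ‖y - x‖ + ‖x - x₀‖ < R) :
    ‖g y - g x‖ ≤ φ (‖y - x‖ + ‖x - x₀‖) - φ ‖x - x₀‖ := by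
  set c := ‖y - x‖
  set d := ‖x - x₀‖
  have hseg : ∀ t ∈ Icc (0:ℝ) 1, x + t • (y - x) ∈ s := fun t ht ↦ hs.add_smul_sub_mem hx hy ht
  have hdist : ∀ t ∈ Icc (0:ℝ) 1, ‖x + t • (y - x) - x₀‖ ≤ c * t + d := fun t ht ↦
    calc ‖x + t • (y - x) - x₀‖ = ‖(x - x₀) + t • (y - x)‖ := by congr 1; abel
      _ ≤ d + t * c := by
        grw [norm_add_le, norm_smul, Real.norm_of_nonneg ht.1]
      _ = c * t + d := by ring
  have hmajR : ∀ t ∈ Icc (0:ℝ) 1, c * t + d ∈ Ico (0:ℝ) R := fun t ht ↦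
    ⟨by have := ht.1; positivity, by nlinarith [ht.2, norm_nonneg (y - x)]⟩
  have hG : ∀ t ∈ Icc (0:ℝ) 1, HasDerivAt (fun t : ℝ ↦ g (x + t • (y - x)) - g x)
      (g' (x + t • (y - x)) (y - x)) t := fun t ht ↦ by
    have hline : HasDerivAt (fun t : ℝ ↦ x + t • (y - x)) (y - x) t := by
      simpa using ((hasDerivAt_id t).smul_const (y - x)).const_add x
    exact ((hg _ (hseg t ht)).comp_hasDerivAt t hline).sub_const (g x)
  have hB : ∀ t ∈ Icc (0:ℝ) 1, HasDerivAt (fun t : ℝ ↦ φ (c * t + d) - φ d)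
      (φ' (c * t + d) * c) t := fun t ht ↦ by
    have hline : HasDerivAt (fun t : ℝ ↦ c * t + d) c t := by
      simpa using ((hasDerivAt_id t).const_mul c).add_const d
    exact ((hφ _ (hmajR t ht)).comp t hline).sub_const (φ d)
  have hG'B' : ∀ t ∈ Ico (0:ℝ) 1, ‖g' (x + t • (y - x)) (y - x)‖ ≤ φ' (c * t + d) * c :=
    fun t ht ↦ by
    have ht' := Ico_subset_Icc_self ht
    have hnorm : ‖x + t • (y - x) - x₀‖ ∈ Ico (0:ℝ) R :=
      ⟨norm_nonneg _, (hdist t ht').trans_lt (hmajR t ht').2⟩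
    calc ‖g' (x + t • (y - x)) (y - x)‖ ≤ ‖g' (x + t • (y - x))‖ * c := (g' _).le_opNorm _
      _ ≤ φ' ‖x + t • (y - x) - x₀‖ * c := by gcongr; exact hbound _ (hseg t ht')
      _ ≤ φ' (c * t + d) * c := by gcongr; exact hφ' hnorm (hmajR t ht') (hdist t ht')
  have hcmp := image_norm_le_of_norm_deriv_right_le_deriv_boundary'
    (fun t ht ↦ (hG t ht).continuousAt.continuousWithinAt)
    (fun t ht ↦ (hG t (Ico_subset_Icc_self ht)).hasDerivWithinAt) (by simp)
    (fun t ht ↦ (hB t ht).continuousAt.continuousWithinAt)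
    (fun t ht ↦ (hB t (Ico_subset_Icc_self ht)).hasDerivWithinAt) hG'B'
    (right_mem_Icc.mpr zero_le_one)
  simpa using hcmp

theorem stmt19_general
    {X Y : Type*} [NormedAddCommGroup X] [NormedSpace ℝ X]
    [NormedAddCommGroup Y] [NormedSpace ℝ Y]
    (Ω : Set X)
    (f' : X → X →L[ℝ] Y) (f'' : X → X →L[ℝ] X →L[ℝ] Y)
    (hf2 : ∀ x ∈ Ω, HasFDerivAt f' (f'' x) x)
    (x₀ : X) (R : ℝ)
    (κ : ℝ) (hκ : κ = sSup {t : ℝ | t ∈ Ico (0:ℝ) R ∧ ball x₀ t ⊆ Ω})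
    (lam : ℝ) (hlam : 0 < lam)
    (ψ' ψ'' : ℝ → ℝ)
    (hψ2 : ∀ t ∈ Ico (0:ℝ) R, HasDerivAt ψ' (ψ'' t) t)
    (hψ2mono : MonotoneOn ψ'' (Ico (0:ℝ) R))
    (hbound : ∀ x ∈ ball x₀ κ, lam * ‖f'' x‖ ≤ ψ'' ‖x - x₀‖) :
    ∀ x ∈ ball x₀ κ, ∀ y ∈ ball x₀ κ, ‖y - x‖ + ‖x - x₀‖ < R →
      lam * ‖f' y - f' x‖ ≤ ψ' (‖y - x‖ + ‖x - x₀‖) - ψ' ‖x - x₀‖ := by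
  have hball : ball x₀ κ ⊆ Ω := hκ ▸ ball_sSup_subset fun _ ht ↦ ht.2
  intro x hx y hy hxy
  have hmaj := norm_sub_le_of_norm_fderiv_le_majorant (convex_ball x₀ κ)
    (g := fun z ↦ lam • f' z) (g' := fun z ↦ lam • f'' z)
    (fun z hz ↦ (hf2 z (hball hz)).const_smul lam) hψ2 hψ2mono
    (fun z hz ↦ (norm_smul_of_nonneg hlam.le (f'' z)).trans_le (hbound z hz)) hx hy hxy
  rwa [← smul_sub, norm_smul_of_nonneg hlam.le] at hmaj

/-- Lemma `lc`: if `λ‖f″(x)‖ ≤ ψ″(‖x − x₀‖)` on `B(x₀, κ)` (with `ψ″` nondecreasing),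
then `f` and `ψ` satisfy the majorant condition
`λ‖f′(y) − f′(x)‖ ≤ ψ′(‖y − x‖ + ‖x − x₀‖) − ψ′(‖x − x₀‖)`. -/
theorem stmt19
    {X Y : Type*} [NormedAddCommGroup X] [NormedSpace ℝ X] [CompleteSpace X]
    [NormedAddCommGroup Y] [NormedSpace ℝ Y] [CompleteSpace Y]
    (Ω : Set X) (hΩ : IsOpen Ω)
    (f : X → Y) (f' : X → X →L[ℝ] Y) (f'' : X → X →L[ℝ] X →L[ℝ] Y)
    (hf1 : ∀ x ∈ Ω, HasFDerivAt f (f' x) x)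
    (hf2 : ∀ x ∈ Ω, HasFDerivAt f' (f'' x) x)
    (hf2c : ContinuousOn f'' Ω)
    (x₀ : X) (hx₀ : x₀ ∈ Ω) (R : ℝ) (hR : 0 < R)
    (κ : ℝ) (hκ : κ = sSup {t : ℝ | t ∈ Ico (0:ℝ) R ∧ ball x₀ t ⊆ Ω})
    (lam : ℝ) (hlam : 0 < lam)
    (ψ ψ' ψ'' : ℝ → ℝ)
    (hψ1 : ∀ t ∈ Ico (0:ℝ) R, HasDerivAt ψ (ψ' t) t)
    (hψ2 : ∀ t ∈ Ico (0:ℝ) R, HasDerivAt ψ' (ψ'' t) t)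
    (hψ2c : ContinuousOn ψ'' (Ico (0:ℝ) R))
    (hψ2mono : MonotoneOn ψ'' (Ico (0:ℝ) R))
    (hbound : ∀ x ∈ ball x₀ κ, lam * ‖f'' x‖ ≤ ψ'' ‖x - x₀‖) :
    ∀ x ∈ ball x₀ κ, ∀ y ∈ ball x₀ κ, ‖y - x‖ + ‖x - x₀‖ < R →
      lam * ‖f' y - f' x‖ ≤ ψ' (‖y - x‖ + ‖x - x₀‖) - ψ' ‖x - x₀‖ :=
  stmt19_general Ω f' f'' hf2 x₀ R κ hκ lam hlam ψ' ψ'' hψ2 hψ2mono hbound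
end
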